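/- Let A be an abelian category, T a full subcategory of projective objects closed under finite direct sums and direct summands, and f : M → N an epimorphism in A. Then the image of f in the stable category A̅ = A/⟨T⟩ is an isomorphism if and only if f is a retraction in A with ker(f) ∈ T. -/

import Mathlib

/-!
If `f` becomes invertible in `A/⟨T⟩`, pick `g` with `g ≫ f - 𝟙` and `f ≫ g - 𝟙` factoring through `T`.
The first factors through a projective, hence lifts along the epimorphism `f`; correcting `g` by
that lift gives a section `s` of `f`. The second, precomposed with `kernel.ι f`, shows that
`kernel.ι f` factors through `T`; since `kernel.ι f` is split by `𝟙 - f ≫ s`, `kernel f` is a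
direct summand of an object of `T`. Conversely `𝟙 - f ≫ s` factors through `kernel f`.
-/

open CategoryTheory CategoryTheory.Limits

/-- A morphism factors through an object of the class `T`. -/
def FactorsThruClass {A : Type*} [Category A] (T : A → Prop) {X Y : A} (f : X ⟶ Y) : Prop :=
  ∃ (Z : A) (a : X ⟶ Z) (b : Z ⟶ Y), T Z ∧ a ≫ b = f

/-- The relation identifying two morphisms whose difference factors through an
object of `T`; the quotient by it is the stable category `A/⟨T⟩`. -/
def stableRel {A : Type*} [Category A] [Preadditive A] (T : A → Prop) : HomRel A :=
  fun {X Y} (f g : X ⟶ Y) => FactorsThruClass T (f - g)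

namespace FactorsThruClass

open ZeroObject

variable {A : Type*} [Category A] {T : A → Prop}

theorem precomp {X Y W : A} {f : X ⟶ Y} (h : FactorsThruClass T f) (g : W ⟶ X) :
    FactorsThruClass T (g ≫ f) := by
  obtain ⟨Z, a, b, hZ, rfl⟩ := h
  exact ⟨Z, g ≫ a, b, hZ, Category.assoc _ _ _⟩

theorem postcomp {X Y W : A} {f : X ⟶ Y} (h : FactorsThruClass T f) (g : Y ⟶ W) :
    FactorsThruClass T (f ≫ g) := by
  obtain ⟨Z, a, b, hZ, rfl⟩ := h
  exact ⟨Z, a, b ≫ g, hZ, (Category.assoc _ _ _).symm⟩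

theorem zero [Preadditive A] [HasZeroObject A] (hzero : ∀ Z : A, IsZero Z → T Z) (X Y : A) :
    FactorsThruClass T (0 : X ⟶ Y) :=
  ⟨0, 0, 0, hzero _ (isZero_zero A), zero_comp⟩

theorem neg [Preadditive A] {X Y : A} {f : X ⟶ Y} (h : FactorsThruClass T f) :
    FactorsThruClass T (-f) := by
  obtain ⟨Z, a, b, hZ, rfl⟩ := h
  exact ⟨Z, -a, b, hZ, Preadditive.neg_comp _ _⟩

theorem add [Preadditive A] [HasBinaryBiproducts A] (hsum : ∀ X Y : A, T X → T Y → T (X ⊞ Y))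
    {X Y : A} {f g : X ⟶ Y} (hf : FactorsThruClass T f) (hg : FactorsThruClass T g) :
    FactorsThruClass T (f + g) := by
  obtain ⟨Z, a, b, hZ, rfl⟩ := hf
  obtain ⟨W, c, d, hW, rfl⟩ := hg
  exact ⟨Z ⊞ W, biprod.lift a c, biprod.desc b d, hsum _ _ hZ hW, biprod.lift_desc⟩

theorem lift_of_epi (hproj : ∀ X : A, T X → Projective X) {X Y N : A} {h : X ⟶ N}
    (hh : FactorsThruClass T h) (f : Y ⟶ N) [Epi f] : ∃ k : X ⟶ Y, k ≫ f = h := by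
  obtain ⟨Z, a, b, hZ, rfl⟩ := hh
  have := hproj Z hZ
  exact ⟨a ≫ Projective.factorThru b f, by rw [Category.assoc, Projective.factorThru_comp]⟩

theorem of_retraction (hsummand : ∀ X Z : A, T Z → (∃ (i : X ⟶ Z) (r : Z ⟶ X), i ≫ r = 𝟙 X) → T X)
    {X Y : A} {i : X ⟶ Y} (hi : FactorsThruClass T i) {q : Y ⟶ X} (hq : i ≫ q = 𝟙 X) : T X := by
  obtain ⟨Z, a, b, hZ, rfl⟩ := hi
  exact hsummand X Z hZ ⟨a, b ≫ q, by rwa [← Category.assoc]⟩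

end FactorsThruClass

theorem stableRel_congruence {A : Type*} [Category A] [Preadditive A] [HasZeroObject A]
    [HasBinaryBiproducts A] {T : A → Prop} (hzero : ∀ Z : A, IsZero Z → T Z)
    (hsum : ∀ X Y : A, T X → T Y → T (X ⊞ Y)) : Congruence (stableRel T) where
  equivalence :=
    { refl := fun f => by simpa [stableRel] using FactorsThruClass.zero hzero _ _
      symm := fun {f g} h => by simpa [stableRel] using h.neg
      trans := fun {f g h} hfg hgh => by
        simpa [stableRel] using FactorsThruClass.add hsum hfg hgh }
  comp_left g _ _ h := by simpa [stableRel, Preadditive.comp_sub] using h.precomp g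
  comp_right g h := by simpa [stableRel, Preadditive.sub_comp] using h.postcomp g

theorem CategoryTheory.Quotient.isIso_functor_map_iff {C : Type*} [Category C] (r : HomRel C)
    [Congruence r] {X Y : C} (f : X ⟶ Y) :
    IsIso ((Quotient.functor r).map f) ↔ ∃ g : Y ⟶ X, r (f ≫ g) (𝟙 X) ∧ r (g ≫ f) (𝟙 Y) := by
  simp only [← Quotient.functor_map_eq_iff, Functor.map_comp, Functor.map_id]
  constructor
  · intro h
    obtain ⟨g, hg⟩ := (Quotient.functor r).map_surjective (inv ((Quotient.functor r).map f))
    exact ⟨g, by simp [hg], by simp [hg]⟩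
  · rintro ⟨g, hfg, hgf⟩
    exact ⟨_, hfg, hgf⟩

section SplitEpi

variable {A : Type*} [Category A] [Preadditive A] {M N : A} {f : M ⟶ N} {s : N ⟶ M}

theorem id_sub_comp_section_comp (hs : s ≫ f = 𝟙 N) : (𝟙 M - f ≫ s) ≫ f = 0 := by
  rw [Preadditive.sub_comp, Category.assoc, hs, Category.id_comp, Category.comp_id, sub_self]

theorem kernel_ι_comp_lift_id_sub [HasKernel f] (hs : s ≫ f = 𝟙 N) :
    kernel.ι f ≫ kernel.lift f (𝟙 M - f ≫ s) (id_sub_comp_section_comp hs) = 𝟙 (kernel f) := by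
  rw [← cancel_mono (kernel.ι f), Category.assoc, kernel.lift_ι, Preadditive.comp_sub,
    kernel.condition_assoc, zero_comp, sub_zero, Category.comp_id, Category.id_comp]

end SplitEpi

theorem stmt_17 {A : Type*} [Category A] [Abelian A] (T : A → Prop)
    (hproj : ∀ X : A, T X → Projective X)
    (hzero : ∀ Z : A, IsZero Z → T Z)
    (hsum : ∀ X Y : A, T X → T Y → T (X ⊞ Y))
    (hsummand : ∀ X Z : A, T Z → (∃ (i : X ⟶ Z) (r : Z ⟶ X), i ≫ r = 𝟙 X) → T X)
    {M N : A} (f : M ⟶ N) (hf : Epi f) :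
    IsIso ((Quotient.functor (stableRel T)).map f) ↔
      ((∃ s : N ⟶ M, s ≫ f = 𝟙 N) ∧ T (kernel f)) := by
  have := stableRel_congruence hzero hsum
  rw [Quotient.isIso_functor_map_iff]
  constructor
  · rintro ⟨g, hfg, hgf⟩
    obtain ⟨k, hk⟩ := hgf.lift_of_epi hproj f
    have hs : (g - k) ≫ f = 𝟙 N := by rw [Preadditive.sub_comp, hk, sub_sub_cancel]
    have hι : FactorsThruClass T (kernel.ι f) := by
      simpa [Preadditive.comp_sub] using (hfg.precomp (kernel.ι f)).neg
    exact ⟨⟨g - k, hs⟩, hι.of_retraction hsummand (kernel_ι_comp_lift_id_sub hs)⟩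
  · rintro ⟨⟨s, hs⟩, hker⟩
    have hfs : FactorsThruClass T (𝟙 M - f ≫ s) :=
      ⟨kernel f, _, kernel.ι f, hker, kernel.lift_ι _ _ (id_sub_comp_section_comp hs)⟩
    refine ⟨s, ?_, ?_⟩
    · simpa [stableRel] using hfs.neg
    · simpa [stableRel, hs] using FactorsThruClass.zero hzero N N
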